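/- Let 𝒲 be an ultrafilter on W, let A_w be commutative rings with ultraproduct A_♮, and let x_1,…,x_n ∈ A_♮ with approximations x_{1,w},…,x_{n,w} ∈ A_w. If x_{1,w},…,x_{n,w} is a regular sequence on A_w for almost all w, then x_1,…,x_n is a regular sequence on A_♮. -/
import Mathlib


open Filter

variable {W : Type*}

/-- The ideal of tuples vanishing for almost all `w`. -/
def nullIdeal (𝒲 : Ultrafilter W) (A : W → Type*) [∀ w, CommRing (A w)] :
    Ideal (Π w, A w) where
  carrier := {x | {w | x w = 0} ∈ 𝒲}
  add_mem' := by
    intro x y hx hy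
    have := (𝒲 : Filter W).inter_mem hx hy
    refine (𝒲 : Filter W).mem_of_superset this ?_
    rintro w ⟨h1, h2⟩
    simp_all
  zero_mem' := by
    have : {w | (0 : Π w, A w) w = 0} = Set.univ := by ext w; simp
    rw [Set.mem_setOf_eq, this]
    exact (𝒲 : Filter W).univ_mem
  smul_mem' := by
    intro c x hx
    refine (𝒲 : Filter W).mem_of_superset hx ?_
    intro w h
    simp_all

/-- The ultraproduct of the rings `A w` with respect to `𝒲`. -/
abbrev Ultraproduct (𝒲 : Ultrafilter W) (A : W → Type*) [∀ w, CommRing (A w)] :=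
  (Π w, A w) ⧸ nullIdeal 𝒲 A

/-- `ulim`, the class of a tuple in the ultraproduct. -/
abbrev ulim (𝒲 : Ultrafilter W) (A : W → Type*) [∀ w, CommRing (A w)] :
    (Π w, A w) →+* Ultraproduct 𝒲 A :=
  Ideal.Quotient.mk (nullIdeal 𝒲 A)

/-- `x 0, …, x (n-1)` is a regular sequence on `A` : the ideal it generates is
proper and each `x i` is a nonzerodivisor modulo the previous elements. -/
def IsRegularSeq (A : Type*) [CommRing A] {n : ℕ} (x : Fin n → A) : Prop :=
  Ideal.span (Set.range x) ≠ ⊤ ∧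
    ∀ i : Fin n, ∀ z : A,
      x i * z ∈ Ideal.span (x '' {j | j < i}) → z ∈ Ideal.span (x '' {j | j < i})

lemma image_lt_eq_range {B : Type*} {n : ℕ} (f : Fin n → B) (i : Fin n) :
    f '' {j | j < i} = Set.range fun j : {j : Fin n // j < i} => f j := by
  rw [Set.image_eq_range]
  rfl

lemma ulim_mem_span {W : Type*} (𝒲 : Ultrafilter W) (A : W → Type*)
    [∀ w, CommRing (A w)] {ι : Type*} [Fintype ι] (y : ι → Π w, A w) (z : Π w, A w) :
    ulim 𝒲 A z ∈ Ideal.span (Set.range fun i => ulim 𝒲 A (y i)) ↔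
      {w | z w ∈ Ideal.span (Set.range fun i => y i w)} ∈ 𝒲 := by
  classical
  constructor
  · intro hz
    rw [Ideal.mem_span_range_iff_exists_fun] at hz
    obtain ⟨c, hc⟩ := hz
    choose c' hc' using fun i => Ideal.Quotient.mk_surjective (c i)
    have heq : ulim 𝒲 A (∑ i, c' i * y i) = ulim 𝒲 A z := by
      rw [map_sum]
      simp only [map_mul, hc']
      exact hc
    have hnull : (∑ i, c' i * y i) - z ∈ nullIdeal 𝒲 A :=
      Ideal.Quotient.eq.mp heq
    refine (𝒲 : Filter W).mem_of_superset hnull ?_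
    intro w hw
    simp only [Set.mem_setOf_eq, Pi.sub_apply] at hw ⊢
    have hzw : z w = ∑ i, c' i w * y i w := by
      have h2 := sub_eq_zero.mp hw
      simpa [Finset.sum_apply] using h2.symm
    rw [hzw, Ideal.mem_span_range_iff_exists_fun]
    exact ⟨fun i => c' i w, rfl⟩
  · intro hz
    have key : ∀ w, ∃ c : ι → A w, z w ∈ Ideal.span (Set.range fun i => y i w) →
        ∑ i, c i * y i w = z w := by
      intro w
      by_cases hw : z w ∈ Ideal.span (Set.range fun i => y i w)
      · obtain ⟨c, hc⟩ := Ideal.mem_span_range_iff_exists_fun.mp hw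
        exact ⟨c, fun _ => hc⟩
      · exact ⟨0, fun hmem => absurd hmem hw⟩
    choose c hc using key
    have hnull : (∑ i, (fun w => c w i) * y i) - z ∈ nullIdeal 𝒲 A := by
      refine (𝒲 : Filter W).mem_of_superset hz ?_
      intro w hw
      simp only [Set.mem_setOf_eq, Pi.sub_apply, Finset.sum_apply, Pi.mul_apply]
      rw [hc w hw, sub_self]
    have heq : ulim 𝒲 A (∑ i, (fun w => c w i) * y i) = ulim 𝒲 A z :=
      Ideal.Quotient.eq.mpr hnull
    rw [← heq, map_sum]
    refine Ideal.sum_mem _ fun i _ => ?_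
    rw [map_mul]
    exact Ideal.mul_mem_left _ _ (Ideal.subset_span ⟨i, rfl⟩)

/-- If the approximations `x 0 w, …, x (n-1) w` form a regular sequence on `A w`
for almost all `w`, then `ulim (x 0), …, ulim (x (n-1))` is a regular sequence on
the ultraproduct. -/
theorem ulim_isRegularSeq {W : Type*} (𝒲 : Ultrafilter W) (A : W → Type*)
    [∀ w, CommRing (A w)] {n : ℕ} (x : Fin n → Π w, A w)
    (h : {w | IsRegularSeq (A w) (fun i => x i w)} ∈ 𝒲) :
    IsRegularSeq (Ultraproduct 𝒲 A) (fun i => ulim 𝒲 A (x i)) := by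
  classical
  constructor
  · -- properness
    intro htop
    have h1 : (1 : Ultraproduct 𝒲 A) ∈ Ideal.span (Set.range fun i => ulim 𝒲 A (x i)) := by
      rw [htop]; trivial
    have h1' : ulim 𝒲 A 1 ∈ Ideal.span (Set.range fun i => ulim 𝒲 A (x i)) := by
      simpa using h1
    have hmem := (ulim_mem_span 𝒲 A x 1).mp h1'
    have hint := (𝒲 : Filter W).inter_mem hmem h
    obtain ⟨w, hw1, hw2⟩ := Filter.nonempty_of_mem hint
    exact hw2.1 (Ideal.eq_top_iff_one _ |>.mpr (by simpa using hw1))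
  · intro i z hz
    obtain ⟨z', rfl⟩ := Ideal.Quotient.mk_surjective z
    rw [image_lt_eq_range] at hz ⊢
    have hz' : ulim 𝒲 A (x i * z') ∈
        Ideal.span (Set.range fun j : {j : Fin n // j < i} => ulim 𝒲 A (x j)) := by
      simpa [map_mul] using hz
    have hmem := (ulim_mem_span 𝒲 A (fun j : {j : Fin n // j < i} => x j) (x i * z')).mp hz'
    rw [ulim_mem_span]
    refine (𝒲 : Filter W).mem_of_superset ((𝒲 : Filter W).inter_mem hmem h) ?_
    rintro w ⟨hw1, hw2⟩
    have := hw2.2 i (z' w)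
    rw [image_lt_eq_range] at this
    exact this (by simpa using hw1)
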